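/- Every finite prefix of the infinite word 010110·t is overlap-free, and every finite prefix of the infinite word 101001101001·t is overlap-free, where t is the Thue–Morse word. -/

import Mathlib

/-- An overlap is a word of the form xYxYx where x is a letter and Y is a
possibly empty word. -/
def IsOverlap {α : Type*} (w : List α) : Prop :=
  ∃ (x : α) (Y : List α), w = [x] ++ Y ++ [x] ++ Y ++ [x]

/-- A word contains an overlap if some factor (contiguous subword) of it is an overlap. -/
def HasOverlap {α : Type*} (w : List α) : Prop :=
  ∃ u, u <:+: w ∧ IsOverlap u

/-- A word is overlap-free if none of its factors is an overlap. -/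
def OverlapFree {α : Type*} (w : List α) : Prop := ¬ HasOverlap w

/-- The Thue–Morse word: the n-th letter (0-indexed) is the parity of the number
of 1s in the binary expansion of n. -/
def thueMorse (n : ℕ) : Fin 2 := Fin.ofNat 2 (Nat.digits 2 n).sum

/-- The finite prefix of length n of an infinite word. -/
def wordPrefix {α : Type*} (s : ℕ → α) (n : ℕ) : List α := (List.range n).map s

/-- The infinite word obtained by prepending a finite word to an infinite word. -/
def prependWord {α : Type*} (u : List α) (s : ℕ → α) : ℕ → α :=
  fun n => if h : n < u.length then u.get ⟨n, h⟩ else s (n - u.length)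

/-!
Write μ for the morphism 0 ↦ 01, 1 ↦ 10, so that t = μ(t). A μ-image alternates across every
even position. An overlap of odd period p carries this to the odd positions as well, so it would
alternate throughout, which is absurd since its two ends lie at odd distance p and agree. Hence an
overlap of period p in μ(s) has p even and comes from an overlap of period p/2 in s: μ preserves
overlap-freeness, and so does dropping a first letter. By induction on the period, a·t is
overlap-free, being a suffix of μ((a+1)·t). Then 10·t = μ(1·t), 1001·t = μ(10·t), its suffix
001·t, 010110·t = μ(001·t) and 101001101001·t = μ(110110·t) are overlap-free, where 110110·t
differs from 010110·t only in its first letter and an overlap starting there is excluded directly.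
-/

section Overlap

variable {α : Type*}

def IsOverlapAt (s : ℕ → α) (j p : ℕ) : Prop :=
  0 < p ∧ ∀ i ≤ p, s (j + i) = s (j + i + p)

def OverlapFreeSeq (s : ℕ → α) : Prop := ∀ j p, ¬ IsOverlapAt s j p

theorem IsOverlap.exists_period {u : List α} (hu : IsOverlap u) :
    ∃ p, 0 < p ∧ u.length = 2 * p + 1 ∧ ∀ i ≤ p, u[i]? = u[i + p]? := by
  obtain ⟨x, Y, rfl⟩ := hu
  refine ⟨Y.length + 1, by omega, by simp; omega, fun i hi => ?_⟩
  have hu : [x] ++ Y ++ [x] ++ Y ++ [x] = (x :: Y) ++ ((x :: Y) ++ [x]) := by simp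
  have hv : (x :: Y).length = Y.length + 1 := rfl
  rw [hu]
  conv_rhs => rw [List.getElem?_append_right (by omega), hv, Nat.add_sub_cancel]
  rcases Nat.lt_or_ge i (Y.length + 1) with hi' | hi'
  · rw [List.getElem?_append_left (by omega), List.getElem?_append_left (by omega)]
  · obtain rfl : i = Y.length + 1 := by omega
    conv_rhs => rw [List.getElem?_append_right (by omega), hv, Nat.sub_self]
    simp

theorem OverlapFreeSeq.overlapFree_wordPrefix {s : ℕ → α} (hs : OverlapFreeSeq s) (n : ℕ) :
    OverlapFree (wordPrefix s n) := by
  rintro ⟨u, hinf, hu⟩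
  obtain ⟨p, hp, hlen, hper⟩ := hu.exists_period
  obtain ⟨k, hk, hget⟩ := List.infix_iff_getElem?.mp hinf
  simp only [wordPrefix, List.length_map, List.length_range] at hk hget
  have hu_eq : ∀ i ≤ 2 * p, u[i]? = some (s (i + k)) := by
    intro i hi
    rw [List.getElem?_eq_getElem (by omega), ← hget i (by omega), List.getElem?_map,
      List.getElem?_range (by omega)]
    rfl
  refine hs k p ⟨hp, fun i hi => ?_⟩
  have := hper i hi
  rw [hu_eq i (by omega), hu_eq (i + p) (by omega)] at this
  simpa [Nat.add_comm, Nat.add_left_comm] using this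

theorem prependWord_nil (s : ℕ → α) : prependWord [] s = s := by
  funext n; simp [prependWord]

theorem prependWord_cons_zero (a : α) (u : List α) (s : ℕ → α) :
    prependWord (a :: u) s 0 = a := by
  simp [prependWord]

theorem prependWord_cons_succ (a : α) (u : List α) (s : ℕ → α) (n : ℕ) :
    prependWord (a :: u) s (n + 1) = prependWord u s n := by
  simp only [prependWord, List.length_cons, Nat.add_lt_add_iff_right, Nat.add_sub_add_right]
  rfl

theorem isOverlapAt_prependWord_cons_succ {a : α} {u : List α} {s : ℕ → α} {j p : ℕ} :
    IsOverlapAt (prependWord (a :: u) s) (j + 1) p ↔ IsOverlapAt (prependWord u s) j p := by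
  simp only [IsOverlapAt, Nat.add_right_comm j 1, Nat.add_right_comm _ 1 p, prependWord_cons_succ]

theorem OverlapFreeSeq.of_prependWord_cons {a : α} {u : List α} {s : ℕ → α}
    (h : OverlapFreeSeq (prependWord (a :: u) s)) : OverlapFreeSeq (prependWord u s) :=
  fun j p hov => h (j + 1) p (isOverlapAt_prependWord_cons_succ.mpr hov)

theorem OverlapFreeSeq.prependWord_cons {a : α} {u : List α} {s : ℕ → α}
    (h : OverlapFreeSeq (prependWord u s))
    (h₀ : ∀ p, ¬ IsOverlapAt (prependWord (a :: u) s) 0 p) :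
    OverlapFreeSeq (prependWord (a :: u) s)
  | 0, p => h₀ p
  | j + 1, p => fun hov => h j p (isOverlapAt_prependWord_cons_succ.mp hov)

end Overlap

section Morphism

open Fin.NatCast

def muSeq (s : ℕ → Fin 2) (n : ℕ) : Fin 2 := s (n / 2) + (n : Fin 2)

def muWord (u : List (Fin 2)) : List (Fin 2) := u.flatMap fun a => [a, a + 1]

variable {s : ℕ → Fin 2}

theorem natCast_eq_natCast_of_mod_two {m n : ℕ} (h : m % 2 = n % 2) :
    (m : Fin 2) = (n : Fin 2) :=
  Fin.ext (by simpa only [Fin.val_natCast] using h)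

theorem muSeq_add_two (s : ℕ → Fin 2) (n : ℕ) :
    muSeq s (n + 2) = muSeq (fun k => s (k + 1)) n := by
  rw [muSeq, muSeq, Nat.add_div_right n two_pos,
    natCast_eq_natCast_of_mod_two (m := n + 2) (n := n) (by omega)]

theorem muSeq_add_one_of_even {n : ℕ} (hn : Even n) : muSeq s (n + 1) = muSeq s n + 1 := by
  obtain ⟨k, rfl⟩ := hn
  rw [muSeq, muSeq, show (k + k + 1) / 2 = (k + k) / 2 by omega, Nat.cast_succ, add_assoc]

theorem muSeq_add_one_of_odd_period {a p m : ℕ} (hp : Odd p)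
    (h : ∀ i ≤ m, muSeq s (a + i) = muSeq s (a + i + p)) {i : ℕ} (hi : i < m) :
    muSeq s (a + i + 1) = muSeq s (a + i) + 1 := by
  rcases Nat.even_or_odd (a + i) with he | ho
  · exact muSeq_add_one_of_even he
  · have e := muSeq_add_one_of_even (s := s) (ho.add_odd hp)
    rwa [← h i hi.le, show a + i + p + 1 = a + (i + 1) + p by omega, ← h (i + 1) hi] at e

theorem muSeq_add_of_odd_period {a p m : ℕ} (hp : Odd p)
    (h : ∀ i ≤ m, muSeq s (a + i) = muSeq s (a + i + p)) {i : ℕ} (hi : i ≤ m) :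
    muSeq s (a + i) = muSeq s a + (i : Fin 2) := by
  induction i with
  | zero => simp
  | succ i ih =>
    rw [← add_assoc, muSeq_add_one_of_odd_period hp h (by omega), ih (by omega), Nat.cast_succ,
      add_assoc]

theorem IsOverlapAt.even_of_muSeq {j p : ℕ} (h : IsOverlapAt (muSeq s) j p) : Even p := by
  by_contra hodd
  rw [Nat.not_even_iff_odd] at hodd
  have e := muSeq_add_of_odd_period hodd h.2 le_rfl
  rw [← add_zero j, ← h.2 0 p.zero_le,
    natCast_eq_natCast_of_mod_two (n := 1) (Nat.odd_iff.mp hodd)] at e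
  simp at e

theorem IsOverlapAt.of_muSeq {j p : ℕ} (h : IsOverlapAt (muSeq s) j p) :
    IsOverlapAt s (j / 2) (p / 2) := by
  obtain ⟨q, rfl⟩ := h.even_of_muSeq
  refine ⟨by have := h.1; omega, fun i hi => ?_⟩
  have e := h.2 (2 * i) (by omega)
  simp only [muSeq,
    natCast_eq_natCast_of_mod_two (m := j + 2 * i + (q + q)) (n := j + 2 * i) (by omega)] at e
  rwa [show (j + 2 * i) / 2 = j / 2 + i by omega,
    show (j + 2 * i + (q + q)) / 2 = j / 2 + i + (q + q) / 2 by omega, add_left_inj] at e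

theorem OverlapFreeSeq.muSeq (h : OverlapFreeSeq s) : OverlapFreeSeq (muSeq s) :=
  fun _ _ hov => h _ _ hov.of_muSeq

theorem muWord_cons (a : Fin 2) (u : List (Fin 2)) :
    muWord (a :: u) = a :: (a + 1) :: muWord u :=
  rfl

theorem muSeq_prependWord (u : List (Fin 2)) (s : ℕ → Fin 2) :
    muSeq (prependWord u s) = prependWord (muWord u) (muSeq s) := by
  induction u generalizing s with
  | nil => simp [muWord, prependWord_nil]
  | cons a u ih =>
    funext n
    rcases n with _ | _ | n
    · simp [muSeq, muWord_cons, prependWord_cons_zero]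
    · simp [muSeq, muWord_cons, prependWord_cons_zero, prependWord_cons_succ]
    · simp only [muSeq_add_two, prependWord_cons_succ, muWord_cons, ih]

theorem thueMorse_eq (n : ℕ) : thueMorse n = thueMorse (n / 2) + (n : Fin 2) := by
  rcases n.eq_zero_or_pos with rfl | hn
  · simp
  · unfold thueMorse
    rw [Nat.digits_def' one_lt_two hn, List.sum_cons]
    ext
    simp only [Fin.val_add, Fin.val_ofNat, Fin.val_natCast]
    omega

theorem muSeq_thueMorse : muSeq thueMorse = thueMorse :=
  funext fun n => (thueMorse_eq n).symm

end Morphism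

theorem OverlapFreeSeq.prependWord_muWord {u v : List (Fin 2)}
    (h : OverlapFreeSeq (prependWord u thueMorse)) (huv : muWord u = v) :
    OverlapFreeSeq (prependWord v thueMorse) := by
  rw [← huv, ← muSeq_thueMorse, ← muSeq_prependWord]
  exact h.muSeq

theorem overlapFreeSeq_prependWord_singleton_thueMorse (a : Fin 2) :
    OverlapFreeSeq (prependWord [a] thueMorse) := by
  suffices ∀ p a j, ¬ IsOverlapAt (prependWord [a] thueMorse) j p from fun j p => this p a j
  intro p
  induction p using Nat.strong_induction_on with
  | _ p ih =>
    intro a j hov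
    -- `a·t` is a suffix of `μ((a+1)·t) = (a+1)a·t`
    have hμ : muWord [a + 1] = [a + 1, a] := by fin_cases a <;> rfl
    have hsuffix : IsOverlapAt (muSeq (prependWord [a + 1] thueMorse)) (j + 1) p := by
      rwa [muSeq_prependWord, muSeq_thueMorse, hμ, isOverlapAt_prependWord_cons_succ]
    exact ih (p / 2) (by have := hov.1; omega) (a + 1) _ hsuffix.of_muSeq

theorem not_isOverlapAt_zero_110110 (p : ℕ) :
    ¬ IsOverlapAt (prependWord [1, 1, 0, 1, 1, 0] thueMorse) 0 p := by
  rintro ⟨hp, H⟩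
  set w := prependWord [1, 1, 0, 1, 1, 0] thueMorse with hw_def
  set s := prependWord [0, 0, 1] thueMorse
  have hH : ∀ i ≤ p, w i = w (i + p) := by simpa only [zero_add] using H
  have hv : muSeq s = prependWord [0, 1, 0, 1, 1, 0] thueMorse := by
    rw [muSeq_prependWord, muSeq_thueMorse]
    rfl
  have hw : ∀ n, 0 < n → w n = muSeq s n
    | n + 1, _ => by rw [hw_def, hv, prependWord_cons_succ, prependWord_cons_succ]
  rcases Nat.even_or_odd p with heven | hodd
  · -- `w` starts with `11`, whereas the μ-image `muSeq s` differs at positions `p` and `p + 1`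
    have h0 : muSeq s p = 1 := by rw [← hw p hp, ← zero_add p, ← hH 0 p.zero_le]; rfl
    have h1 : muSeq s (p + 1) = 1 := by
      rw [← hw (p + 1) p.succ_pos, add_comm, ← hH 1 hp]; rfl
    rw [muSeq_add_one_of_even heven, h0] at h1
    exact absurd h1 (by decide)
  · obtain rfl | rfl | hp5 : p = 1 ∨ p = 3 ∨ 5 ≤ p := by
      obtain ⟨r, rfl⟩ := hodd; omega
    · exact absurd (hH 1 le_rfl) (by decide)
    · exact absurd (hH 3 le_rfl) (by decide)
    · -- an odd square in a μ-image alternates, but `muSeq s = 010110⋯`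
      have hsq : ∀ i ≤ p - 1, muSeq s (1 + i) = muSeq s (1 + i + p) := fun i hi => by
        rw [← hw _ (by omega), ← hw _ (by omega), hH _ (by omega)]
      have := muSeq_add_one_of_odd_period hodd hsq (i := 2) (by omega)
      rw [hv] at this
      exact absurd this (by decide)

theorem prefixes_of_prepended_thueMorse_overlapFree (n : ℕ) :
    OverlapFree (wordPrefix (prependWord [0,1,0,1,1,0] thueMorse) n) ∧
    OverlapFree (wordPrefix (prependWord [1,0,1,0,0,1,1,0,1,0,0,1] thueMorse) n) := by
  have h1 := overlapFreeSeq_prependWord_singleton_thueMorse 1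
  have h10 := h1.prependWord_muWord (v := [1, 0]) (by decide)
  have h001 := (h10.prependWord_muWord (v := [1, 0, 0, 1]) (by decide)).of_prependWord_cons
  have h010110 := h001.prependWord_muWord (v := [0, 1, 0, 1, 1, 0]) (by decide)
  have h110110 := h010110.of_prependWord_cons.prependWord_cons not_isOverlapAt_zero_110110
  exact ⟨h010110.overlapFree_wordPrefix n,
    (h110110.prependWord_muWord (by decide)).overlapFree_wordPrefix n⟩
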